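/- Let r₁, r₂, r₃ be real numbers with cosh r₁ · cosh(r₁ + r₂ + r₃) > 0, and suppose l₁ > 0 satisfies the tangent law tanh²(l₁/2) = (cosh r₂ · cosh r₃)/(cosh r₁ · cosh(r₁ + r₂ + r₃)). Then cosh² r₁ ≥ 1/(4 tanh²(l₁/2)). -/

import Mathlib

/-! By the tangent law the claim is `cosh (r₁ + r₂ + r₃) ≤ 4 cosh r₁ cosh r₂ cosh r₃`.
Expanding, `cosh (a + b + c) / (cosh a cosh b cosh c)` is `1` plus three products of two
values of `tanh`, each less than `1`. -/

open Real

theorem Real.cosh_add_add (a b c : ℝ) :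
    cosh (a + b + c) = cosh a * cosh b * cosh c *
      (1 + tanh a * tanh b + tanh a * tanh c + tanh b * tanh c) := by
  have := cosh_pos a; have := cosh_pos b; have := cosh_pos c
  simp only [tanh_eq_sinh_div_cosh, cosh_add, sinh_add]
  field_simp
  ring

theorem Real.tanh_mul_tanh_lt_one (a b : ℝ) : tanh a * tanh b < 1 :=
  calc tanh a * tanh b ≤ |tanh a| * |tanh b| := abs_mul (tanh a) (tanh b) ▸ le_abs_self _
    _ < 1 := mul_lt_one_of_nonneg_of_lt_one_left (abs_nonneg _) (abs_tanh_lt_one a)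
      (abs_tanh_lt_one b).le

theorem Real.cosh_add_add_lt (a b c : ℝ) : cosh (a + b + c) < 4 * (cosh a * cosh b * cosh c) := by
  rw [cosh_add_add, mul_comm 4]
  have := cosh_pos a; have := cosh_pos b; have := cosh_pos c
  gcongr
  linarith [tanh_mul_tanh_lt_one a b, tanh_mul_tanh_lt_one a c, tanh_mul_tanh_lt_one b c]

theorem stmt6_general (r₁ r₂ r₃ l₁ : ℝ)
    (htan : Real.tanh (l₁ / 2) ^ 2 =
      (Real.cosh r₂ * Real.cosh r₃) / (Real.cosh r₁ * Real.cosh (r₁ + r₂ + r₃))) :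
    Real.cosh r₁ ^ 2 ≥ 1 / (4 * Real.tanh (l₁ / 2) ^ 2) := by
  have := cosh_pos r₁; have := cosh_pos r₂; have := cosh_pos r₃
  have := cosh_pos (r₁ + r₂ + r₃)
  calc cosh r₁ ^ 2
      = cosh r₁ * (4 * (cosh r₁ * cosh r₂ * cosh r₃)) / (4 * (cosh r₂ * cosh r₃)) := by
        field_simp
    _ ≥ cosh r₁ * cosh (r₁ + r₂ + r₃) / (4 * (cosh r₂ * cosh r₃)) := by
        gcongr; exact (cosh_add_add_lt r₁ r₂ r₃).le
    _ = 1 / (4 * tanh (l₁ / 2) ^ 2) := by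
        rw [htan]; field_simp

theorem stmt6 (r₁ r₂ r₃ l₁ : ℝ) (hl : 0 < l₁)
    (hpos : 0 < Real.cosh r₁ * Real.cosh (r₁ + r₂ + r₃))
    (htan : Real.tanh (l₁ / 2) ^ 2 =
      (Real.cosh r₂ * Real.cosh r₃) / (Real.cosh r₁ * Real.cosh (r₁ + r₂ + r₃))) :
    Real.cosh r₁ ^ 2 ≥ 1 / (4 * Real.tanh (l₁ / 2) ^ 2) :=
  stmt6_general r₁ r₂ r₃ l₁ htan
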